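/- Let k be an algebraically closed field of characteristic 2, σ the automorphism of SL₃(k) given by σ(g) = J·(gᵀ)⁻¹·J with J the 3×3 antidiagonal permutation matrix, G := SL₃(k) ⋊ ⟨σ⟩, and ε(x) := I₃ + x·E₁₃ ∈ SL₃(k). Let c ∈ kˣ with c³ ≠ 1 and set t := diag(c, c⁻², c) ∈ SL₃(k). If a, b ∈ k and there exists g ∈ G satisfying g·(t, 1)·g⁻¹ = (t, 1), g·(ε(a), σ)·g⁻¹ = (ε(b), σ), and g·(ε(1), 1)·g⁻¹ = (ε(1), 1), then a = b. (Consequently the homomorphisms ρ_a of Theorem 1.11 are pairwise non-G-conjugate for distinct a.) -/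

import Mathlib

set_option linter.unusedSectionVars false

open Matrix

noncomputable section

/-- `SL₃(k)`. -/
abbrev SL3 (k : Type*) [Field k] := Matrix.SpecialLinearGroup (Fin 3) k

/-- The 3×3 antidiagonal permutation matrix `J`. -/
def Jmat (k : Type*) [Field k] : Matrix (Fin 3) (Fin 3) k := !![0,0,1;0,1,0;1,0,0]

lemma Jmat_mul_Jmat (k : Type*) [Field k] : Jmat k * Jmat k = 1 := by
  ext i j
  fin_cases i <;> fin_cases j <;>
    simp [Jmat, Matrix.mul_apply, Fin.sum_univ_succ, Matrix.one_apply]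

lemma Jmat_det (k : Type*) [Field k] [CharP k 2] : (Jmat k).det = 1 := by
  simp [Jmat, Matrix.det_fin_three, CharTwo.neg_eq]

variable (k : Type*) [Field k] [CharP k 2]

/-- `J` as an element of `SL₃(k)` (its determinant is `-1 = 1` in characteristic two). -/
def JSL : SL3 k := ⟨Jmat k, Jmat_det k⟩

lemma JSL_mul_JSL : JSL k * JSL k = 1 := Subtype.ext (by
  show Jmat k * Jmat k = 1; exact Jmat_mul_Jmat k)

/-- Transpose, as a map `SL₃(k) → SL₃(k)`. -/
def TSL (g : SL3 k) : SL3 k :=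
  ⟨(g : Matrix (Fin 3) (Fin 3) k)ᵀ, by simp⟩

lemma TSL_mul (g h : SL3 k) : TSL k (g * h) = TSL k h * TSL k g :=
  Subtype.ext (by simp [TSL, Matrix.transpose_mul]; rfl)

lemma TSL_inv (g : SL3 k) : TSL k g⁻¹ = (TSL k g)⁻¹ :=
  Subtype.ext (by
    simp [TSL, Matrix.SpecialLinearGroup.coe_inv, Matrix.adjugate_transpose]; rfl)

lemma TSL_TSL (g : SL3 k) : TSL k (TSL k g) = g := Subtype.ext (by simp [TSL])

/-- The automorphism `g ↦ (gᵀ)⁻¹` of `SL₃(k)`. -/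
def transposeInvAut : MulAut (SL3 k) :=
{ toFun := fun g => TSL k g⁻¹
  invFun := fun g => TSL k g⁻¹
  left_inv := fun g => by
    show TSL k (TSL k g⁻¹)⁻¹ = g
    simp only [TSL_inv, TSL_TSL, inv_inv]
  right_inv := fun g => by
    show TSL k (TSL k g⁻¹)⁻¹ = g
    simp only [TSL_inv, TSL_TSL, inv_inv]
  map_mul' := fun g h => by
    show TSL k (g * h)⁻¹ = TSL k g⁻¹ * TSL k h⁻¹
    rw [_root_.mul_inv_rev, TSL_mul] }

/-- The order-2 (graph) automorphism `σ` of `SL₃(k)` given by `σ(g) = J ⬝ (gᵀ)⁻¹ ⬝ J`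
(recall that `J⁻¹ = J`). -/
def sigmaAut : MulAut (SL3 k) :=
  (transposeInvAut k).trans (MulAut.conj (JSL k))

/-- The unipotent element `ε(x) = I₃ + x·E₁₃` of `SL₃(k)`. -/
def eps (x : k) : SL3 k :=
  ⟨!![1,0,x;0,1,0;0,0,1], by simp [Matrix.det_fin_three]⟩

/-- The non-connected reductive group `G = SL₃(k) ⋊ ⟨σ⟩`. -/
abbrev Ghat := SL3 k ⋊[(Subgroup.zpowers (sigmaAut k)).subtype] (Subgroup.zpowers (sigmaAut k))

/-- `σ` as an element of the subgroup `⟨σ⟩` of `Aut(SL₃(k))`. -/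
def sigEl : Subgroup.zpowers (sigmaAut k) := ⟨sigmaAut k, Subgroup.mem_zpowers _⟩

end

/-- The diagonal element `t = diag(c, c⁻², c)` of `SL₃(k)`. -/
noncomputable def tdiag (k : Type*) [Field k] (c : k) (hc : c ≠ 0) : SL3 k :=
  ⟨!![c,0,0;0,(c^2)⁻¹,0;0,0,c], by
    simp [Matrix.det_fin_three]
    try field_simp
    try ring⟩

/-!
Write `g = (n, h)` with `h ∈ {1, σ}`. If `h = σ`, the first relation says that `n` conjugates
`σ(t) = t⁻¹ = diag(c⁻¹, c², c⁻¹)` to `t`; comparing traces in characteristic two gives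
`c² = c⁻²`, so `c⁴ = 1`, which forces `c = 1` because Frobenius is injective, contradicting
`c³ ≠ 1`. If `h = 1`, then `n` centralizes `t` (whose eigenvalues `c ≠ c⁻²` split `k³` as
`⟨e₁, e₃⟩ ⊕ ⟨e₂⟩`) and `ε(1)`, so `n = [[x, 0, y], [0, d, 0], [0, 0, x]]`. Such a matrix satisfies
`J nᵀ J = n`, i.e. `σ(n)⁻¹ = n`, so the second relation reads `n ε(a) n = ε(b)`, whose `(1,1)`
and `(1,3)` entries give `x² = 1` and `b = x² a + 2xy = a`.
-/

theorem SemidirectProduct.left_mul_mul_inv {N G : Type*} [Group N] [Group G]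
    {φ : G →* MulAut N} (g x : N ⋊[φ] G) :
    (g * x * g⁻¹).left =
      g.left * φ g.right x.left * φ (g.right * x.right * g.right⁻¹) g.left⁻¹ := by
  simp only [SemidirectProduct.mul_left, SemidirectProduct.inv_left, map_mul, MulAut.mul_apply,
    mul_assoc]

theorem Matrix.apply_eq_zero_of_commute_diagonal {n R : Type*} [Fintype n] [DecidableEq n]
    [CommRing R] [NoZeroDivisors R] {M : Matrix n n R} {d : n → R}
    (hM : Commute M (diagonal d)) {i j : n} (hij : d i ≠ d j) : M i j = 0 := by
  have h := ext_iff.mpr hM i j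
  rw [mul_diagonal, diagonal_mul] at h
  exact (mul_eq_zero.mp (show (d j - d i) * M i j = 0 by linear_combination h)).resolve_left
    (sub_ne_zero.mpr hij.symm)

theorem Matrix.SpecialLinearGroup.trace_mul_mul_inv {n R : Type*} [Fintype n] [DecidableEq n]
    [CommRing R] (g h : SpecialLinearGroup n R) :
    trace ((g * h * g⁻¹ : SpecialLinearGroup n R) : Matrix n n R) =
      trace (h : Matrix n n R) := by
  rw [coe_mul, trace_mul_comm, ← coe_mul, inv_mul_cancel_left]

theorem Matrix.SpecialLinearGroup.coe_inv_eq_of_mul_eq_one {n R : Type*} [Fintype n]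
    [DecidableEq n] [CommRing R] (g : SpecialLinearGroup n R) {B : Matrix n n R}
    (h : (g : Matrix n n R) * B = 1) : ((g⁻¹ : SpecialLinearGroup n R) : Matrix n n R) = B :=
  left_inv_eq_right_inv (by rw [← coe_mul, inv_mul_cancel, coe_one]) h

theorem eq_one_or_eq_of_mem_zpowers_of_sq_eq_one {G : Type*} [Group G] {x y : G}
    (hx : x ^ 2 = 1) (hy : y ∈ Subgroup.zpowers x) : y = 1 ∨ y = x := by
  obtain ⟨m, rfl⟩ := Subgroup.mem_zpowers_iff.mp hy
  rw [zpow_eq_zpow_emod' m hx]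
  rcases Int.emod_two_eq_zero_or_one m with h | h <;> simp [h]

theorem eq_one_of_pow_four_eq_one {R : Type*} [CommRing R] [IsReduced R] [CharP R 2] {x : R}
    (h : x ^ 4 = 1) : x = 1 :=
  iterateFrobenius_inj R 2 2 (by simpa [iterateFrobenius_def] using h)

section Field

variable {k : Type*} [Field k]

theorem Jmat_transpose : (Jmat k)ᵀ = Jmat k := by
  ext i j
  fin_cases i <;> fin_cases j <;> rfl

theorem Jmat_mul_transpose_mul_Jmat_of_centralizer (x y d : k) :
    Jmat k * (!![x, 0, y; 0, d, 0; 0, 0, x])ᵀ * Jmat k = !![x, 0, y; 0, d, 0; 0, 0, x] := by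
  ext i j
  fin_cases i <;> fin_cases j <;>
    simp [Jmat, mul_apply, vecMul, dotProduct, Fin.sum_univ_three]

variable {c : k} (hc0 : c ≠ 0)

theorem coe_tdiag :
    (tdiag k c hc0 : Matrix (Fin 3) (Fin 3) k) = diagonal ![c, (c ^ 2)⁻¹, c] := by
  ext i j
  fin_cases i <;> fin_cases j <;> simp [tdiag]

theorem coe_tdiag_inv :
    (((tdiag k c hc0)⁻¹ : SL3 k) : Matrix (Fin 3) (Fin 3) k) =
      diagonal ![c⁻¹, c ^ 2, c⁻¹] := by
  refine SpecialLinearGroup.coe_inv_eq_of_mul_eq_one _ ?_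
  rw [coe_tdiag, diagonal_mul_diagonal, ← diagonal_one]
  congr 1
  ext i
  fin_cases i <;> simp [hc0]

end Field

section CharTwo

variable {k : Type*} [Field k] [CharP k 2]

theorem coe_sigmaAut (n : SL3 k) :
    (sigmaAut k n : Matrix (Fin 3) (Fin 3) k) = Jmat k * (n⁻¹ : SL3 k)ᵀ * Jmat k := by
  rw [show sigmaAut k n = JSL k * TSL k n⁻¹ * (JSL k)⁻¹ from rfl,
    inv_eq_of_mul_eq_one_right (JSL_mul_JSL k)]
  rfl

theorem coe_sigmaAut_inv (n : SL3 k) :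
    (((sigmaAut k n)⁻¹ : SL3 k) : Matrix (Fin 3) (Fin 3) k) =
      Jmat k * (n : Matrix (Fin 3) (Fin 3) k)ᵀ * Jmat k := by
  rw [← map_inv, coe_sigmaAut, inv_inv]

theorem sigmaAut_sigmaAut (n : SL3 k) : sigmaAut k (sigmaAut k n) = n := by
  ext1
  rw [coe_sigmaAut, coe_sigmaAut_inv, transpose_mul, transpose_mul, Jmat_transpose,
    transpose_transpose]
  simp only [← mul_assoc, Jmat_mul_Jmat, one_mul]
  rw [mul_assoc, Jmat_mul_Jmat, mul_one]

theorem coe_sigEl : ((sigEl k : Subgroup.zpowers (sigmaAut k)) : MulAut (SL3 k)) = sigmaAut k :=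
  rfl

theorem sigmaAut_sq : sigmaAut k ^ 2 = 1 :=
  MulEquiv.ext fun n => by rw [pow_two, MulAut.mul_apply, sigmaAut_sigmaAut]; rfl

theorem eq_one_or_eq_sigEl (h : Subgroup.zpowers (sigmaAut k)) : h = 1 ∨ h = sigEl k :=
  (eq_one_or_eq_of_mem_zpowers_of_sq_eq_one sigmaAut_sq h.2).imp Subtype.ext Subtype.ext

theorem trace_sigmaAut (n : SL3 k) :
    trace (sigmaAut k n : Matrix (Fin 3) (Fin 3) k) =
      trace ((n⁻¹ : SL3 k) : Matrix (Fin 3) (Fin 3) k) := by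
  rw [coe_sigmaAut, trace_mul_comm, ← mul_assoc, Jmat_mul_Jmat, one_mul, trace_transpose]

theorem coe_eps (x : k) : (eps k x : Matrix (Fin 3) (Fin 3) k) = 1 + single 0 2 x := by
  ext i j
  fin_cases i <;> fin_cases j <;> simp [eps, one_apply]

theorem eq_of_mul_eps_mul_eq_eps {x y d a b : k}
    (h : !![x, 0, y; 0, d, 0; 0, 0, x] * (eps k a : Matrix (Fin 3) (Fin 3) k) *
      !![x, 0, y; 0, d, 0; 0, 0, x] = eps k b) : a = b := by
  have h00 : x * x = 1 := by
    simpa [eps, mul_apply, Fin.sum_univ_three] using congrFun (congrFun h 0) 0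
  have h02 : x * y + (x * a + y) * x = b := by
    simpa [eps, mul_apply, Fin.sum_univ_three] using congrFun (congrFun h 0) 2
  linear_combination (-a) * h00 + h02 - x * y * CharTwo.two_eq_zero (R := k)

variable {c : k} (hc0 : c ≠ 0)

theorem coe_eq_of_commute_tdiag_of_commute_eps (hc3 : c ^ 3 ≠ 1) {n : SL3 k}
    (ht : Commute n (tdiag k c hc0)) (he : Commute n (eps k 1)) :
    (n : Matrix (Fin 3) (Fin 3) k) = !![n 0 0, 0, n 0 2; 0, n 1 1, 0; 0, 0, n 0 0] := by
  have hne : c ≠ (c ^ 2)⁻¹ := by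
    intro h
    apply hc3
    field_simp at h
    linear_combination h
  have ht' : Commute (n : Matrix (Fin 3) (Fin 3) k) (diagonal ![c, (c ^ 2)⁻¹, c]) := by
    simpa [coe_tdiag] using ht.map SpecialLinearGroup.coeMonoidHom
  have hs : Commute (single 0 2 1) (n : Matrix (Fin 3) (Fin 3) k) := by
    have he' := he.map SpecialLinearGroup.coeMonoidHom
    simp only [SpecialLinearGroup.coeMonoidHom_apply, coe_eps] at he'
    simpa using (he'.sub_right (Commute.one_right _)).symm
  ext i j
  fin_cases i <;> fin_cases j
  · rfl
  · exact apply_eq_zero_of_commute_diagonal ht' hne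
  · rfl
  · exact col_eq_zero_of_commute_single hs (k := 1) (by decide)
  · rfl
  · exact apply_eq_zero_of_commute_diagonal ht' hne.symm
  · exact col_eq_zero_of_commute_single hs (k := 2) (by decide)
  · exact row_eq_zero_of_commute_single hs (k := 1) (by decide)
  · exact (diag_eq_of_commute_single hs).symm

theorem sigmaAut_tdiag_conj_ne (hc3 : c ^ 3 ≠ 1) (n : SL3 k) :
    n * sigmaAut k (tdiag k c hc0) * n⁻¹ ≠ tdiag k c hc0 := by
  intro h
  have htr : c⁻¹ + c ^ 2 + c⁻¹ = c + (c ^ 2)⁻¹ + c := by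
    have := congrArg (fun m : SL3 k => trace (m : Matrix (Fin 3) (Fin 3) k)) h
    rw [SpecialLinearGroup.trace_mul_mul_inv, trace_sigmaAut, coe_tdiag_inv, coe_tdiag] at this
    simpa [Fin.sum_univ_three] using this
  have hsq : c ^ 2 = (c ^ 2)⁻¹ := by
    linear_combination htr + (c - c⁻¹) * CharTwo.two_eq_zero (R := k)
  have hc4 : c ^ 4 = 1 := calc
    c ^ 4 = c ^ 2 * (c ^ 2)⁻¹ := by rw [← hsq]; ring
    _ = 1 := mul_inv_cancel₀ (pow_ne_zero 2 hc0)
  exact hc3 (by rw [eq_one_of_pow_four_eq_one hc4, one_pow])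

end CharTwo

theorem stmt_2_general (k : Type*) [Field k] [CharP k 2]
    (c : k) (hc0 : c ≠ 0) (hc3 : c ^ 3 ≠ 1) (a b : k) (g : Ghat k)
    (h1 : g * ⟨tdiag k c hc0, 1⟩ * g⁻¹ = ⟨tdiag k c hc0, 1⟩)
    (h2 : g * ⟨eps k a, sigEl k⟩ * g⁻¹ = ⟨eps k b, sigEl k⟩)
    (h3 : g * ⟨eps k 1, 1⟩ * g⁻¹ = ⟨eps k 1, 1⟩) :
    a = b := by
  obtain ⟨n, h⟩ := g
  have e1 := congrArg SemidirectProduct.left h1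
  have e2 := congrArg SemidirectProduct.left h2
  have e3 := congrArg SemidirectProduct.left h3
  rw [SemidirectProduct.left_mul_mul_inv] at e1 e2 e3
  rcases eq_one_or_eq_sigEl h with rfl | rfl
  · simp only [Subgroup.subtype_apply, OneMemClass.coe_one, MulAut.one_apply, mul_one, inv_one,
      one_mul, map_inv, coe_sigEl] at e1 e2 e3
    have hN := coe_eq_of_commute_tdiag_of_commute_eps hc0 hc3
      (mul_inv_eq_iff_eq_mul.mp e1) (mul_inv_eq_iff_eq_mul.mp e3)
    have e2' := congrArg SpecialLinearGroup.coeMonoidHom e2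
    simp only [map_mul, SpecialLinearGroup.coeMonoidHom_apply] at e2'
    rw [coe_sigmaAut_inv, hN, Jmat_mul_transpose_mul_Jmat_of_centralizer] at e2'
    exact eq_of_mul_eps_mul_eq_eps e2'
  · simp only [Subgroup.subtype_apply, mul_one, mul_inv_cancel, OneMemClass.coe_one,
      MulAut.one_apply, coe_sigEl] at e1
    exact absurd e1 (sigmaAut_tdiag_conj_ne hc0 hc3 n)

/-- If `c ∈ kˣ` with `c³ ≠ 1` and `g ∈ G = SL₃(k) ⋊ ⟨σ⟩` conjugates `(t, 1)` to itself,
`(ε a, σ)` to `(ε b, σ)`, and `(ε 1, 1)` to itself, then `a = b`: the representations `ρₐ`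
are pairwise non-`G`-conjugate for distinct `a`. -/
theorem stmt_2 (k : Type*) [Field k] [IsAlgClosed k] [CharP k 2]
    (c : k) (hc0 : c ≠ 0) (hc3 : c ^ 3 ≠ 1) (a b : k) (g : Ghat k)
    (h1 : g * ⟨tdiag k c hc0, 1⟩ * g⁻¹ = ⟨tdiag k c hc0, 1⟩)
    (h2 : g * ⟨eps k a, sigEl k⟩ * g⁻¹ = ⟨eps k b, sigEl k⟩)
    (h3 : g * ⟨eps k 1, 1⟩ * g⁻¹ = ⟨eps k 1, 1⟩) :
    a = b :=
  stmt_2_general k c hc0 hc3 a b g h1 h2 h3
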